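/- Under the stated assumptions on Λ and f, suppose in addition that c₀ := lim_{z→∞} f(z)·exp(−∫_0^z Λ(y) dy) is finite. Then for every x ∈ ℝ: (i) ∫_x^∞ |f(z) − f'(z)/Λ(z)|·Λ(z)·exp(−∫_x^z Λ(y) dy) dz < ∞; and (ii) ∫_x^∞ (f(z) − f'(z)/Λ(z))·Λ(z)·exp(−∫_x^z Λ(y) dy) dz = f(x) − c₀·exp(∫_0^x Λ(y) dy). -/

import Mathlib

/-!
Write `E z = exp (-∫_x^z Λ)`. The integrand is `(f Λ - f') E = -(f E)'`, and `f E` is absolutely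
continuous on compact intervals, so `∫_x^b` of the integrand is `f x - f b E b`, which tends to
`f x - c₀ exp (∫_0^x Λ)`. Because `f - f'/Λ` has a.e. constant sign near `+∞`, convergence of these
partial integrals already forces absolute integrability on `(x, ∞)`.
-/

open MeasureTheory Filter Set Topology

theorem LipschitzOnWith.comp_absolutelyContinuousOnInterval {X Y : Type*} [PseudoMetricSpace X]
    [PseudoMetricSpace Y] {g : X → Y} {f : ℝ → X}
    {s : Set X} {K : NNReal} {a b : ℝ} (hg : LipschitzOnWith K g s)
    (hf : AbsolutelyContinuousOnInterval f a b) (hfs : MapsTo f (uIcc a b) s) :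
    AbsolutelyContinuousOnInterval (g ∘ f) a b := by
  have hK : Tendsto (fun E : ℕ × (ℕ → ℝ × ℝ) ↦
      K * ∑ i ∈ Finset.range E.1, dist (f (E.2 i).1) (f (E.2 i).2))
      (AbsolutelyContinuousOnInterval.totalLengthFilter ⊓
        𝓟 (AbsolutelyContinuousOnInterval.disjWithin a b)) (𝓝 0) := by
    simpa only [mul_zero] using Tendsto.const_mul (K : ℝ) hf
  refine squeeze_zero' (Eventually.of_forall fun _ ↦ Finset.sum_nonneg fun _ _ ↦ dist_nonneg)
    ?_ hK
  filter_upwards [inf_le_right (a := AbsolutelyContinuousOnInterval.totalLengthFilter)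
    (mem_principal_self _)] with E hE
  rw [Finset.mul_sum]
  exact Finset.sum_le_sum fun i hi ↦
    hg.dist_le_mul _ (hfs (hE.1 i hi).1) _ (hfs (hE.1 i hi).2)

theorem ContDiff.comp_absolutelyContinuousOnInterval {g f : ℝ → ℝ} {a b : ℝ}
    (hg : ContDiff ℝ 1 g) (hf : AbsolutelyContinuousOnInterval f a b) :
    AbsolutelyContinuousOnInterval (g ∘ f) a b := by
  obtain ⟨K, hK⟩ := hg.locallyLipschitz.locallyLipschitzOn.exists_lipschitzOnWith_of_compact
    (isCompact_uIcc.image_of_continuousOn hf.continuousOn)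
  exact hK.comp_absolutelyContinuousOnInterval hf (mapsTo_image f _)

section ExpNegIntegral

variable {Λ f f' : ℝ → ℝ} {a b : ℝ}

theorem AbsolutelyContinuousOnInterval.of_sub_eq_integral (hf' : IntervalIntegrable f' volume a b)
    (hf : ∀ z, f z - f a = ∫ y in a..z, f' y) : AbsolutelyContinuousOnInterval f a b := by
  have hfeq : f = fun z ↦ f a + ∫ y in a..z, f' y := funext fun z ↦ by rw [← hf z]; ring
  rw [hfeq]
  exact (LipschitzWith.const (f a)).lipschitzOnWith.absolutelyContinuousOnInterval.add
    (hf'.absolutelyContinuousOnInterval_intervalIntegral left_mem_uIcc)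

theorem ae_hasDerivAt_of_sub_eq_integral (hf' : IntervalIntegrable f' volume a b)
    (hf : ∀ z, f z - f a = ∫ y in a..z, f' y) :
    ∀ᵐ z, z ∈ uIcc a b → HasDerivAt f (f' z) z := by
  have hfeq : f = fun z ↦ f a + ∫ y in a..z, f' y := funext fun z ↦ by rw [← hf z]; ring
  filter_upwards [hf'.ae_hasDerivAt_integral] with z hz hzab
  rw [hfeq]
  exact (hz hzab a left_mem_uIcc).const_add _

theorem absolutelyContinuousOnInterval_exp_neg_integral (hΛ : IntervalIntegrable Λ volume a b) :
    AbsolutelyContinuousOnInterval (fun z ↦ Real.exp (-∫ y in a..z, Λ y)) a b :=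
  (Real.contDiff_exp.comp contDiff_neg).comp_absolutelyContinuousOnInterval
    (hΛ.absolutelyContinuousOnInterval_intervalIntegral left_mem_uIcc)

theorem intervalIntegrable_mul_sub_mul_exp_neg_integral (hΛ : IntervalIntegrable Λ volume a b)
    (hf' : IntervalIntegrable f' volume a b) (hf : AbsolutelyContinuousOnInterval f a b) :
    IntervalIntegrable (fun z ↦ (f z * Λ z - f' z) * Real.exp (-∫ y in a..z, Λ y)) volume a b :=
  ((hΛ.continuousOn_mul hf.continuousOn).sub hf').mul_continuousOn
    (absolutelyContinuousOnInterval_exp_neg_integral hΛ).continuousOn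

theorem integral_mul_sub_mul_exp_neg_integral (hΛ : IntervalIntegrable Λ volume a b)
    (hf : AbsolutelyContinuousOnInterval f a b) (hf' : ∀ᵐ z, z ∈ uIcc a b → HasDerivAt f (f' z) z) :
    ∫ z in a..b, (f z * Λ z - f' z) * Real.exp (-∫ y in a..z, Λ y)
      = f a - f b * Real.exp (-∫ y in a..b, Λ y) := by
  have hE : ∀ᵐ z, z ∈ uIcc a b → HasDerivAt (fun z ↦ Real.exp (-∫ y in a..z, Λ y))
      (-Λ z * Real.exp (-∫ y in a..z, Λ y)) z := by
    filter_upwards [hΛ.ae_hasDerivAt_integral] with z hz hzab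
    exact (hz hzab a left_mem_uIcc).neg.exp.congr_deriv (mul_comm _ _)
  have hprod := hf.integral_deriv_mul_eq_sub (absolutelyContinuousOnInterval_exp_neg_integral hΛ)
  rw [intervalIntegral.integral_same, neg_zero, Real.exp_zero, mul_one] at hprod
  rw [← neg_sub, ← hprod, ← intervalIntegral.integral_neg]
  refine intervalIntegral.integral_congr_ae ?_
  filter_upwards [hf', hE] with z hfz hEz hz
  rw [(hfz (uIoc_subset_uIcc hz)).deriv, (hEz (uIoc_subset_uIcc hz)).deriv]
  ring

end ExpNegIntegral

theorem integrableOn_Ioi_of_tendsto_intervalIntegral_of_ae_nonneg {F : ℝ → ℝ} {a t I : ℝ}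
    (hF : ∀ b, IntegrableOn F (Ioc a b)) (hnonneg : ∀ᵐ z ∂volume.restrict (Ioi t), 0 ≤ F z)
    (hlim : Tendsto (fun b ↦ ∫ z in a..b, F z) atTop (𝓝 I)) : IntegrableOn F (Ioi a) := by
  set s := max a t
  rw [← Ioc_union_Ioi_eq_Ioi (le_max_left a t)]
  refine (hF s).union (integrableOn_Ioi_of_intervalIntegral_norm_tendsto (I - ∫ z in a..s, F z) s
    (fun b ↦ (hF b).mono_set (Ioc_subset_Ioc_left (le_max_left a t))) tendsto_id ?_)
  have hint : ∀ b, a ≤ b → IntervalIntegrable F volume a b := fun b hb ↦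
    (intervalIntegrable_iff_integrableOn_Ioc_of_le hb).2 (hF b)
  refine (hlim.sub_const _).congr' ?_
  filter_upwards [eventually_ge_atTop s] with b hb
  rw [intervalIntegral.integral_interval_sub_left (hint b ((le_max_left a t).trans hb))
    (hint s (le_max_left a t))]
  refine intervalIntegral.integral_congr_ae ?_
  rw [ae_restrict_iff' measurableSet_Ioi] at hnonneg
  filter_upwards [hnonneg] with z hz hzs
  rw [uIoc_of_le hb] at hzs
  exact (Real.norm_of_nonneg (hz ((le_max_right a t).trans_lt hzs.1))).symm

theorem integrableOn_Ioi_of_tendsto_intervalIntegral_of_ae_sign {F : ℝ → ℝ} {a t I : ℝ}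
    (hF : ∀ b, IntegrableOn F (Ioc a b))
    (hsign : (∀ᵐ z ∂volume.restrict (Ioi t), 0 ≤ F z) ∨ ∀ᵐ z ∂volume.restrict (Ioi t), F z ≤ 0)
    (hlim : Tendsto (fun b ↦ ∫ z in a..b, F z) atTop (𝓝 I)) : IntegrableOn F (Ioi a) := by
  rcases hsign with hnonneg | hnonpos
  · exact integrableOn_Ioi_of_tendsto_intervalIntegral_of_ae_nonneg hF hnonneg hlim
  · have hneg := integrableOn_Ioi_of_tendsto_intervalIntegral_of_ae_nonneg (F := -F)
      (fun b ↦ (hF b).neg) (hnonpos.mono fun z hz ↦ neg_nonneg.2 hz)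
      (by simpa only [Pi.neg_apply, intervalIntegral.integral_neg] using hlim.neg)
    simpa using hneg.neg

theorem exists_ae_nonneg_or_ae_nonpos_Ioi {h : ℝ → ℝ} {xs : EReal}
    (hpos : ∀ᵐ z : ℝ, xs < z → 0 < h z) (hneg : ∀ᵐ z : ℝ, (z : EReal) ≤ xs → h z ≤ 0) :
    ∃ t : ℝ, (∀ᵐ z ∂volume.restrict (Ioi t), 0 ≤ h z) ∨
      ∀ᵐ z ∂volume.restrict (Ioi t), h z ≤ 0 := by
  rcases eq_or_ne xs ⊤ with rfl | hxs
  · exact ⟨0, .inr (ae_restrict_of_ae (hneg.mono fun z hz ↦ hz le_top))⟩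
  · obtain ⟨t, hxt, -⟩ := EReal.lt_iff_exists_real_btwn.1 (lt_top_iff_ne_top.2 hxs)
    refine ⟨t, .inl ?_⟩
    rw [ae_restrict_iff' measurableSet_Ioi]
    filter_upwards [hpos] with z hz hzt
    exact (hz (hxt.trans (EReal.coe_lt_coe_iff.2 hzt))).le

theorem tendsto_mul_exp_neg_intervalIntegral {Λ f : ℝ → ℝ} {c₀ : ℝ}
    (hΛ : ∀ a b : ℝ, IntervalIntegrable Λ volume a b)
    (hc₀ : Tendsto (fun z ↦ f z * Real.exp (-∫ y in (0:ℝ)..z, Λ y)) atTop (𝓝 c₀)) (x : ℝ) :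
    Tendsto (fun z ↦ f z * Real.exp (-∫ y in x..z, Λ y)) atTop
      (𝓝 (c₀ * Real.exp (∫ y in (0:ℝ)..x, Λ y))) := by
  refine (hc₀.mul_const _).congr fun z ↦ ?_
  rw [mul_assoc, ← Real.exp_add,
    ← intervalIntegral.integral_add_adjacent_intervals (hΛ 0 x) (hΛ x z)]
  ring_nf

theorem representation_with_c0_general (Λ f f' : ℝ → ℝ) (xs : EReal) (c₀ : ℝ)
    (hΛpos : ∀ y, 0 < Λ y)
    (hΛloc : ∀ a b : ℝ, IntervalIntegrable Λ volume a b)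
    (hf'int : ∀ a b : ℝ, IntervalIntegrable f' volume a b)
    (hFTC : ∀ a b : ℝ, f b - f a = ∫ y in a..b, f' y)
    (hpos : ∀ᵐ (z : ℝ) ∂(volume : Measure ℝ), xs < (z : EReal) → 0 < f z - f' z / Λ z)
    (hneg : ∀ᵐ (z : ℝ) ∂(volume : Measure ℝ), (z : EReal) ≤ xs → f z - f' z / Λ z ≤ 0)
    (hc₀ : Tendsto (fun z : ℝ => f z * Real.exp (-∫ y in (0:ℝ)..z, Λ y)) atTop (nhds c₀)) :
    ∀ x : ℝ,
      IntegrableOn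
        (fun z => |f z - f' z / Λ z| * Λ z * Real.exp (-∫ y in x..z, Λ y)) (Set.Ioi x) ∧
      (∫ z in Set.Ioi x, (f z - f' z / Λ z) * Λ z * Real.exp (-∫ y in x..z, Λ y))
        = f x - c₀ * Real.exp (∫ y in (0:ℝ)..x, Λ y) := by
  intro x
  have hweight : ∀ z, 0 < Λ z * Real.exp (-∫ y in x..z, Λ y) :=
    fun z ↦ mul_pos (hΛpos z) (Real.exp_pos _)
  have hF : (fun z ↦ (f z - f' z / Λ z) * Λ z * Real.exp (-∫ y in x..z, Λ y))
      = fun z ↦ (f z * Λ z - f' z) * Real.exp (-∫ y in x..z, Λ y) :=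
    funext fun z ↦ by rw [sub_mul, div_mul_cancel₀ _ (hΛpos z).ne']
  have hfAC : ∀ b, AbsolutelyContinuousOnInterval f x b := fun b ↦
    .of_sub_eq_integral (hf'int x b) (hFTC x)
  have hpartial : Tendsto (fun b ↦ ∫ z in x..b, (f z - f' z / Λ z) * Λ z *
      Real.exp (-∫ y in x..z, Λ y)) atTop (𝓝 (f x - c₀ * Real.exp (∫ y in (0:ℝ)..x, Λ y))) := by
    simp only [hF, integral_mul_sub_mul_exp_neg_integral (hΛloc x _) (hfAC _)
      (ae_hasDerivAt_of_sub_eq_integral (hf'int x _) (hFTC x))]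
    exact tendsto_const_nhds.sub (tendsto_mul_exp_neg_intervalIntegral hΛloc hc₀ x)
  obtain ⟨t, hsign⟩ := exists_ae_nonneg_or_ae_nonpos_Ioi hpos hneg
  have hint : IntegrableOn (fun z ↦ (f z - f' z / Λ z) * Λ z * Real.exp (-∫ y in x..z, Λ y))
      (Ioi x) := by
    refine integrableOn_Ioi_of_tendsto_intervalIntegral_of_ae_sign (t := t) (fun b ↦ ?_) ?_ hpartial
    · rw [hF]
      exact (intervalIntegrable_mul_sub_mul_exp_neg_integral (hΛloc x b) (hf'int x b) (hfAC b)).1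
    · simp only [mul_assoc]
      exact hsign.imp (fun h ↦ h.mono fun z hz ↦ mul_nonneg hz (hweight z).le)
        (fun h ↦ h.mono fun z hz ↦ mul_nonpos_of_nonpos_of_nonneg hz (hweight z).le)
  refine ⟨?_,
    tendsto_nhds_unique (intervalIntegral_tendsto_integral_Ioi x hint tendsto_id) hpartial⟩
  simpa only [IntegrableOn, abs_mul, mul_assoc, abs_of_pos (hweight _)] using hint.abs

/-- Proposition 2.2 of the paper: under Assumptions 2.2 and 2.3, if
`c₀ = lim_{z→∞} f z * exp (-∫_0^z Λ)` is finite, then for every `x` the function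
`z ↦ (f z - f' z / Λ z) * Λ z * exp (-∫_x^z Λ)` is (absolutely) integrable on `(x, ∞)`
and `∫_x^∞ (f z - f' z / Λ z) * Λ z * exp (-∫_x^z Λ) dz = f x - c₀ * exp (∫_0^x Λ)`. -/
theorem representation_with_c0 (Λ f f' : ℝ → ℝ) (xs : EReal) (c₀ : ℝ)
    (hΛmeas : Measurable Λ) (hΛpos : ∀ y, 0 < Λ y)
    (hΛloc : ∀ a b : ℝ, IntervalIntegrable Λ volume a b)
    (hΛinf : ∀ x : ℝ, (∫⁻ y in Set.Ioi x, ENNReal.ofReal (Λ y)) = ⊤)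
    (hf'int : ∀ a b : ℝ, IntervalIntegrable f' volume a b)
    (hFTC : ∀ a b : ℝ, f b - f a = ∫ y in a..b, f' y)
    (hpos : ∀ᵐ (z : ℝ) ∂(volume : Measure ℝ), xs < (z : EReal) → 0 < f z - f' z / Λ z)
    (hneg : ∀ᵐ (z : ℝ) ∂(volume : Measure ℝ), (z : EReal) ≤ xs → f z - f' z / Λ z ≤ 0)
    (hmono : ∃ htil : ℝ → ℝ, Monotone htil ∧
      ∀ᵐ (z : ℝ) ∂(volume : Measure ℝ), xs < (z : EReal) → f z - f' z / Λ z = htil z)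
    (hfpos : ∀ᶠ z in atTop, 0 < f z)
    (hc₀ : Tendsto (fun z : ℝ => f z * Real.exp (-∫ y in (0:ℝ)..z, Λ y)) atTop (nhds c₀)) :
    ∀ x : ℝ,
      IntegrableOn
        (fun z => |f z - f' z / Λ z| * Λ z * Real.exp (-∫ y in x..z, Λ y)) (Set.Ioi x) ∧
      (∫ z in Set.Ioi x, (f z - f' z / Λ z) * Λ z * Real.exp (-∫ y in x..z, Λ y))
        = f x - c₀ * Real.exp (∫ y in (0:ℝ)..x, Λ y) :=
  representation_with_c0_general Λ f f' xs c₀ hΛpos hΛloc hf'int hFTC hpos hneg hc₀
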